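/- arXiv:1801.01047 — 10 statements merged into one kernel-verified Lean document; each statement's English description precedes it below -/
import Mathlib

section
/- Let f(n,h) = ⌈n/h⌉^t · ⌊n/h⌋^(h-t) where t = n mod h. Then for all positive integers k ≤ n, f(n-k,h) ≤ f(n,h)·(1 - 1/⌈n/h⌉)^k. -/
/-- Product of the part sizes of an equitable partition of `n` into `h` parts:
`⌈n/h⌉ ^ (n % h) * ⌊n/h⌋ ^ (h - n % h)`. -/
def fpart (n h : ℕ) : ℕ := ((n + h - 1) / h) ^ (n % h) * (n / h) ^ (h - n % h)

lemma fpart_step (m h : ℕ) (hm : 1 ≤ m) (hh : 1 ≤ h) :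
    fpart (m - 1) h * ((m + h - 1) / h) = fpart m h * ((m + h - 1) / h - 1) := by
  rcases Nat.lt_or_ge h 2 with h1 | h2
  · -- h = 1
    have : h = 1 := by omega
    subst this
    simp [fpart, Nat.mod_one, Nat.mul_comm]
  have hh0 : 0 < h := hh
  obtain ⟨q, t, ht, rfl⟩ : ∃ q t, t < h ∧ h * q + t = m :=
    ⟨m / h, m % h, Nat.mod_lt _ hh0, Nat.div_add_mod m h⟩
  rcases Nat.eq_zero_or_pos t with rfl | ht1
  · -- t = 0, so h ∣ m, and q ≥ 1
    obtain ⟨p, rfl⟩ : ∃ p, q = p + 1 := by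
      refine ⟨q - 1, ?_⟩
      rcases q with _ | q
      · simp at hm
      · omega
    have hE : h * (p + 1) = h * p + h := by ring
    have e1 : h * (p + 1) + 0 + h - 1 = (h - 1) + h * (p + 1) := by omega
    have e2 : h * (p + 1) + 0 - 1 = (h - 1) + h * p := by omega
    have e3 : h * (p + 1) + 0 - 1 + h - 1 = (h - 2) + h * (p + 1) := by omega
    have d1 : (h * (p + 1) + 0 + h - 1) / h = p + 1 := by
      rw [e1, Nat.add_mul_div_left _ _ hh0, Nat.div_eq_of_lt (by omega)]; omega
    have d3 : (h * (p + 1) + 0 - 1) / h = p := by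
      rw [e2, Nat.add_mul_div_left _ _ hh0, Nat.div_eq_of_lt (by omega)]; omega
    have d4 : (h * (p + 1) + 0 - 1) % h = h - 1 := by
      rw [e2, Nat.add_mul_mod_self_left, Nat.mod_eq_of_lt (by omega)]
    have d5 : (h * (p + 1) + 0 - 1 + h - 1) / h = p + 1 := by
      rw [e3, Nat.add_mul_div_left _ _ hh0, Nat.div_eq_of_lt (by omega)]; omega
    have d6 : (h * (p + 1) + 0) / h = p + 1 := by
      rw [Nat.add_zero, Nat.mul_div_cancel_left _ hh0]
    have d7 : (h * (p + 1) + 0) % h = 0 := by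
      rw [Nat.add_zero, Nat.mul_mod_right]
    unfold fpart
    rw [d1, d3, d4, d5, d6, d7]
    have e4 : h - (h - 1) = 1 := by omega
    rw [e4, pow_zero, pow_one, Nat.sub_zero, Nat.add_sub_cancel]
    have e5 : h = (h - 1) + 1 := by omega
    nth_rewrite 2 [e5]
    ring
  · -- t ≥ 1
    obtain ⟨s, rfl⟩ : ∃ s, t = s + 1 := ⟨t - 1, by omega⟩
    have hE : h * (q + 1) = h * q + h := by ring
    have e1' : h * q + (s + 1) + h - 1 = s + h * (q + 1) := by rw [hE]; omega
    have e2 : h * q + (s + 1) - 1 = s + h * q := by omega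
    have d1 : (h * q + (s + 1) + h - 1) / h = q + 1 := by
      rw [e1', Nat.add_mul_div_left _ _ hh0, Nat.div_eq_of_lt (by omega)]; omega
    have d2 : (h * q + (s + 1)) / h = q := by
      rw [add_comm (h * q), Nat.add_mul_div_left _ _ hh0,
        Nat.div_eq_of_lt (by omega)]
      omega
    have d3 : (h * q + (s + 1)) % h = s + 1 := by
      rw [add_comm (h * q), Nat.add_mul_mod_self_left, Nat.mod_eq_of_lt (by omega)]
    have d4 : (h * q + (s + 1) - 1) / h = q := by
      rw [e2, Nat.add_mul_div_left _ _ hh0, Nat.div_eq_of_lt (by omega)]; omega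
    have d5 : (h * q + (s + 1) - 1) % h = s := by
      rw [e2, Nat.add_mul_mod_self_left, Nat.mod_eq_of_lt (by omega)]
    unfold fpart
    rw [d1, d2, d3, d4, d5]
    have e6 : h - s = (h - (s + 1)) + 1 := by omega
    rw [e6, Nat.add_sub_cancel]
    rcases Nat.eq_zero_or_pos s with rfl | hs1
    · -- s = 0, base of first power has exponent 0
      simp only [pow_zero, pow_one, one_mul]
      ring
    · have e3 : h * q + (s + 1) - 1 + h - 1 = (s - 1) + h * (q + 1) := by rw [hE]; omega
      have d6 : (h * q + (s + 1) - 1 + h - 1) / h = q + 1 := by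
        rw [e3, Nat.add_mul_div_left _ _ hh0, Nat.div_eq_of_lt (by omega)]; omega
      rw [d6]
      ring


lemma ceil_pos (m h : ℕ) (hm : 1 ≤ m) (hh : 1 ≤ h) : 1 ≤ (m + h - 1) / h := by
  rw [Nat.le_div_iff_mul_le hh]
  omega

lemma fpart_step_real (m h : ℕ) (hm : 1 ≤ m) (hh : 1 ≤ h) :
    (fpart (m - 1) h : ℝ) =
      (fpart m h : ℝ) * (1 - 1 / (((m + h - 1) / h : ℕ) : ℝ)) := by
  set c := (m + h - 1) / h with hc
  have hc1 : 1 ≤ c := ceil_pos m h hm hh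
  have hcR : (0 : ℝ) < (c : ℝ) := by exact_mod_cast hc1
  have key : (fpart (m - 1) h : ℝ) * (c : ℝ) = (fpart m h : ℝ) * ((c : ℝ) - 1) := by
    have := fpart_step m h hm hh
    have h2 : ((fpart (m - 1) h * c : ℕ) : ℝ) = ((fpart m h * (c - 1) : ℕ) : ℝ) := by
      exact_mod_cast congrArg (Nat.cast (R := ℝ)) this
    push_cast [Nat.cast_sub hc1] at h2
    linarith
  have hne : (c : ℝ) ≠ 0 := ne_of_gt hcR
  field_simp
  linarith [key]

/-- f(n-k,h) ≤ f(n,h)·(1 - 1/⌈n/h⌉)^k for 1 ≤ k ≤ n. -/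
theorem stmt1 (n h k : ℕ) (hn : 1 ≤ n) (hh : 1 ≤ h) (hk : 1 ≤ k) (hkn : k ≤ n) :
    (fpart (n - k) h : ℝ) ≤
      (fpart n h : ℝ) * (1 - 1 / (((n + h - 1) / h : ℕ) : ℝ)) ^ k := by
  induction k with
  | zero => omega
  | succ k ih =>
    rcases Nat.eq_zero_or_pos k with rfl | hk1
    · rw [pow_one]
      exact le_of_eq (fpart_step_real n h hn hh)
    · have hkn' : k ≤ n := by omega
      have hnk1 : 1 ≤ n - k := by omega
      have step : (fpart (n - (k + 1)) h : ℝ) =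
          (fpart (n - k) h : ℝ) * (1 - 1 / ((((n - k) + h - 1) / h : ℕ) : ℝ)) := by
        have : n - (k + 1) = (n - k) - 1 := by omega
        rw [this]
        exact fpart_step_real (n - k) h hnk1 hh
      set c := (n + h - 1) / h with hc
      set c' := ((n - k) + h - 1) / h with hc'
      have hc'1 : 1 ≤ c' := ceil_pos (n - k) h hnk1 hh
      have hcc' : c' ≤ c := Nat.div_le_div_right (by omega)
      have hfac0 : (0 : ℝ) ≤ 1 - 1 / (c' : ℝ) := by
        have : (1 : ℝ) ≤ (c' : ℝ) := by exact_mod_cast hc'1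
        have : 1 / (c' : ℝ) ≤ 1 := by
          rw [div_le_one (by linarith)]; linarith
        linarith
      have hfacle : (1 : ℝ) - 1 / (c' : ℝ) ≤ 1 - 1 / (c : ℝ) := by
        have hc'R : (0 : ℝ) < (c' : ℝ) := by exact_mod_cast hc'1
        have : 1 / (c : ℝ) ≤ 1 / (c' : ℝ) :=
          one_div_le_one_div_of_le hc'R (by exact_mod_cast hcc')
        linarith
      have hfac0' : (0 : ℝ) ≤ 1 - 1 / (c : ℝ) := le_trans hfac0 hfacle
      calc (fpart (n - (k + 1)) h : ℝ)
          = (fpart (n - k) h : ℝ) * (1 - 1 / (c' : ℝ)) := step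
        _ ≤ ((fpart n h : ℝ) * (1 - 1 / (c : ℝ)) ^ k) * (1 - 1 / (c : ℝ)) := by
            apply mul_le_mul (ih hk1 hkn') hfacle hfac0
            positivity
        _ = (fpart n h : ℝ) * (1 - 1 / (c : ℝ)) ^ (k + 1) := by ring
end

section
/- If a_1,...,a_h are nonnegative integers summing to n that do not form an equitable partition (i.e., some two of them differ by at least 2), then the product a_1·a_2···a_h ≤ f(n,h)·(1 - 1/⌈n/h⌉²), where f(n,h) is the product of the parts of an equitable partition of n into h parts. -/
lemma key_ineq (c M m : ℕ) (h1 : 1 ≤ m) (h2 : m + 1 ≤ c) (h3 : m + 2 ≤ M) (h4 : c ≤ M) :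
    c^2 * (M * m) ≤ (c^2 - 1) * ((M-1) * (m+1)) := by
  have hc2 : 1 ≤ c^2 := by nlinarith
  have hM1 : 1 ≤ M := by omega
  zify [hc2, hM1]
  rcases le_or_gt (c:ℤ) ((m:ℤ) + 2) with hcase | hcase
  · nlinarith [mul_nonneg (by omega : (0:ℤ) ≤ (M:ℤ) - m - 2)
      (by nlinarith : (0:ℤ) ≤ (c:ℤ)^2 - 1 - m),
      sq_nonneg ((c:ℤ) - m - 1)]
  · nlinarith [mul_nonneg (by omega : (0:ℤ) ≤ (M:ℤ) - c)
      (by nlinarith : (0:ℤ) ≤ (c:ℤ)^2 - 1 - m),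
      mul_nonneg (by omega : (0:ℤ) ≤ (c:ℤ) - 2 - m)
      (by nlinarith : (0:ℤ) ≤ (c:ℤ)^2 + c - 1)]


lemma equitable_prod (h : ℕ) (hh : 1 ≤ h) (a : Fin h → ℕ)
    (heq : ∀ i j, a i ≤ a j + 1) : ∏ i, a i = fpart (∑ i, a i) h := by
  have hne : (Finset.univ : Finset (Fin h)).Nonempty := by
    have : Nonempty (Fin h) := Fin.pos_iff_nonempty.mp hh
    exact Finset.univ_nonempty
  obtain ⟨i₀, -, hmin⟩ := Finset.exists_min_image Finset.univ a hne
  obtain ⟨m, hm⟩ : ∃ m, a i₀ = m := ⟨_, rfl⟩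
  have hub : ∀ i, a i ≤ m + 1 := fun i => hm ▸ heq i i₀
  have hlb : ∀ i, m ≤ a i := fun i => hm ▸ hmin i (Finset.mem_univ i)
  obtain ⟨k, hk⟩ : ∃ k, (Finset.univ.filter (fun i => a i = m + 1)).card = k := ⟨_, rfl⟩
  have hkh : k ≤ h := by
    rw [← hk]; exact le_trans (Finset.card_filter_le _ _) (by simp)
  have hcard : (Finset.univ.filter (fun i => ¬ a i = m + 1)).card = h - k := by
    have h2 := Finset.card_filter_add_card_filter_not (s := (Finset.univ : Finset (Fin h)))
      (p := fun i => a i = m + 1)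
    simp only [Finset.card_univ, Fintype.card_fin] at h2
    omega
  have hconst : ∀ i ∈ Finset.univ.filter (fun i => ¬ a i = m+1), a i = m := by
    intro i hi
    have h3 := (Finset.mem_filter.mp hi).2
    have := hub i; have := hlb i; omega
  have hsum : ∑ i, a i = h * m + k := by
    rw [← Finset.sum_filter_add_sum_filter_not Finset.univ (fun i => a i = m+1) a]
    have h1 : ∑ i ∈ Finset.univ.filter (fun i => a i = m+1), a i = k * (m+1) := by
      rw [Finset.sum_congr rfl (fun i hi => (Finset.mem_filter.mp hi).2), Finset.sum_const,
        smul_eq_mul, hk]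
    have h2 : ∑ i ∈ Finset.univ.filter (fun i => ¬ a i = m+1), a i = (h - k) * m := by
      rw [Finset.sum_congr rfl hconst, Finset.sum_const, smul_eq_mul, hcard]
    rw [h1, h2]
    have e2 : (h - k)*m = h*m - k*m := Nat.sub_mul _ _ _
    have e3 : k*m ≤ h*m := Nat.mul_le_mul_right m hkh
    have e1 : k*(m+1) = k*m + k := by ring
    omega
  have hprod : ∏ i, a i = (m+1)^k * m^(h-k) := by
    rw [← Finset.prod_filter_mul_prod_filter_not Finset.univ (fun i => a i = m+1) a]
    congr 1
    · rw [Finset.prod_congr rfl (fun i hi => (Finset.mem_filter.mp hi).2), Finset.prod_const, hk]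
    · rw [Finset.prod_congr rfl hconst, Finset.prod_const, hcard]
  rw [hprod, hsum]
  rcases eq_or_lt_of_le hkh with hke | hkh'
  · rw [hke]
    have hn : h * m + h = h * (m+1) := by ring
    rw [hn, fpart, Nat.mul_mod_right, Nat.mul_div_cancel_left _ (by omega : 0 < h)]
    simp
  · have hmod : (h * m + k) % h = k := by
      rw [Nat.mul_add_mod]; exact Nat.mod_eq_of_lt hkh'
    have hdiv : (h * m + k) / h = m := by
      rw [Nat.mul_add_div (by omega), Nat.div_eq_of_lt hkh']; omega
    rw [fpart, hmod, hdiv]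
    rcases Nat.eq_zero_or_pos k with hk0 | hk1
    · simp [hk0]
    · have hceil : (h * m + k + h - 1) / h = m + 1 := by
        have e : h * (m + 1) = h * m + h := by ring
        have e2 : h * m + k + h - 1 = h * (m + 1) + (k - 1) := by omega
        rw [e2, Nat.mul_add_div (by omega), Nat.div_eq_of_lt (by omega)]
      rw [hceil]


lemma prod_le_fpart (h : ℕ) (hh : 1 ≤ h) :
    ∀ N (a : Fin h → ℕ), (∑ i, (a i)^2) ≤ N → ∏ i, a i ≤ fpart (∑ i, a i) h := by
  intro N
  induction N with
  | zero =>
    intro a hN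
    have heq : ∀ i j, a i ≤ a j + 1 := by
      intro i j
      have h1 : (a i)^2 ≤ 0 := le_trans (Finset.single_le_sum
        (f := fun i => (a i)^2) (fun i _ => Nat.zero_le _) (Finset.mem_univ i)) hN
      nlinarith
    exact le_of_eq (equitable_prod h hh a heq)
  | succ N ih =>
    intro a hN
    by_cases hex : ∃ i j, a j + 2 ≤ a i
    · obtain ⟨i, j, hij⟩ := hex
      have hne : i ≠ j := by rintro rfl; omega
      set a' := Function.update (Function.update a i (a i - 1)) j (a j + 1) with ha'
      have hai' : a' i = a i - 1 := by
        rw [ha', Function.update_of_ne hne, Function.update_self]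
      have haj' : a' j = a j + 1 := by rw [ha', Function.update_self]
      have hrest : ∀ x, x ≠ i → x ≠ j → a' x = a x := by
        intro x hxi hxj
        rw [ha', Function.update_of_ne hxj, Function.update_of_ne hxi]
      -- sum preserved
      have hjmem : j ∈ Finset.univ.erase i := Finset.mem_erase.mpr ⟨Ne.symm hne, Finset.mem_univ j⟩
      have hsum_eq : ∑ x, a' x = ∑ x, a x := by
        rw [← Finset.add_sum_erase _ a' (Finset.mem_univ i),
            ← Finset.add_sum_erase _ a (Finset.mem_univ i),
            ← Finset.add_sum_erase _ a' hjmem, ← Finset.add_sum_erase _ a hjmem]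
        have : ∑ x ∈ (Finset.univ.erase i).erase j, a' x
            = ∑ x ∈ (Finset.univ.erase i).erase j, a x := by
          apply Finset.sum_congr rfl
          intro x hx
          have hx1 := Finset.mem_erase.mp hx
          have hx2 := Finset.mem_erase.mp hx1.2
          exact hrest x hx2.1 hx1.1
        rw [this, hai', haj']
        omega
      -- sum of squares decreases
      have hsq : ∑ x, (a' x)^2 ≤ N := by
        have e : ∑ x, (a' x)^2 + 1 ≤ ∑ x, (a x)^2 := by
          rw [← Finset.add_sum_erase _ (fun x => (a' x)^2) (Finset.mem_univ i),
              ← Finset.add_sum_erase _ (fun x => (a x)^2) (Finset.mem_univ i),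
              ← Finset.add_sum_erase _ (fun x => (a' x)^2) hjmem,
              ← Finset.add_sum_erase _ (fun x => (a x)^2) hjmem]
          have : ∑ x ∈ (Finset.univ.erase i).erase j, (a' x)^2
              = ∑ x ∈ (Finset.univ.erase i).erase j, (a x)^2 := by
            apply Finset.sum_congr rfl
            intro x hx
            have hx1 := Finset.mem_erase.mp hx
            have hx2 := Finset.mem_erase.mp hx1.2
            rw [hrest x hx2.1 hx1.1]
          rw [this, hai', haj']
          have key2 : (a i - 1)^2 + (a j + 1)^2 + 1 ≤ (a i)^2 + (a j)^2 := by
            have h3 : 1 ≤ a i := by omega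
            zify [h3]
            have hz : (a j : ℤ) + 2 ≤ (a i : ℤ) := by exact_mod_cast hij
            nlinarith
          linarith
        omega
      -- product increases
      have hprod_le : ∏ x, a x ≤ ∏ x, a' x := by
        rw [← Finset.mul_prod_erase _ a' (Finset.mem_univ i),
            ← Finset.mul_prod_erase _ a (Finset.mem_univ i),
            ← Finset.mul_prod_erase _ a' hjmem, ← Finset.mul_prod_erase _ a hjmem]
        have : ∏ x ∈ (Finset.univ.erase i).erase j, a' x
            = ∏ x ∈ (Finset.univ.erase i).erase j, a x := by
          apply Finset.prod_congr rfl
          intro x hx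
          have hx1 := Finset.mem_erase.mp hx
          have hx2 := Finset.mem_erase.mp hx1.2
          exact hrest x hx2.1 hx1.1
        rw [this, hai', haj', ← mul_assoc, ← mul_assoc]
        apply Nat.mul_le_mul_right
        have key3 : a i * a j ≤ (a i - 1) * (a j + 1) := by
          zify [show 1 ≤ a i by omega]
          have hz : (a j : ℤ) + 2 ≤ (a i : ℤ) := by exact_mod_cast hij
          nlinarith
        linarith [key3]
      calc ∏ x, a x ≤ ∏ x, a' x := hprod_le
        _ ≤ fpart (∑ x, a' x) h := ih a' hsq
        _ = fpart (∑ x, a x) h := by rw [hsum_eq]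
    · push_neg at hex
      exact le_of_eq (equitable_prod h hh a (fun i j => by have := hex i j; omega))


/-- a non-equitable (h,n)-partition has product at most
f(n,h)·(1 - 1/⌈n/h⌉²). -/
theorem stmt2 (n h : ℕ) (hh : 1 ≤ h) (a : Fin h → ℕ)
    (hsum : ∑ i, a i = n)
    (hnoneq : ∃ i j, a j + 2 ≤ a i) :
    ((∏ i, a i : ℕ) : ℝ) ≤
      (fpart n h : ℝ) * (1 - 1 / (((n + h - 1) / h : ℕ) : ℝ) ^ 2) := by
  obtain ⟨i0, j0, hij0⟩ := hnoneq
  have hne : (Finset.univ : Finset (Fin h)).Nonempty := ⟨i0, Finset.mem_univ i0⟩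
  have hn2 : 2 ≤ n := by
    have := Finset.single_le_sum (f := a) (fun i _ => Nat.zero_le _) (Finset.mem_univ i0)
    omega
  obtain ⟨c, hc⟩ : ∃ c, (n + h - 1) / h = c := ⟨_, rfl⟩
  have hc1 : 1 ≤ c := by
    rw [← hc]
    exact Nat.le_div_iff_mul_le (by omega) |>.mpr (by omega)
  have hcR1 : (1:ℝ) ≤ (c:ℝ)^2 := by
    have : (1:ℝ) ≤ (c:ℝ) := by exact_mod_cast hc1
    nlinarith
  have hfac : (0:ℝ) ≤ 1 - 1 / ((c:ℝ))^2 := by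
    have h2 : (0:ℝ) < (c:ℝ)^2 := by linarith
    have h3 : 1 / ((c:ℝ))^2 ≤ 1 := by
      rw [div_le_one h2]; linarith
    linarith
  rw [hc]
  by_cases hz : ∃ i, a i = 0
  · obtain ⟨i, hi⟩ := hz
    rw [Finset.prod_eq_zero (Finset.mem_univ i) hi]
    push_cast
    exact mul_nonneg (Nat.cast_nonneg _) hfac
  push_neg at hz
  -- max and min
  obtain ⟨i1, -, hmax⟩ := Finset.exists_max_image Finset.univ a hne
  obtain ⟨j1, -, hmin⟩ := Finset.exists_min_image Finset.univ a hne
  have hmax' : ∀ i, a i ≤ a i1 := fun i => hmax i (Finset.mem_univ i)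
  have hmin' : ∀ i, a j1 ≤ a i := fun i => hmin i (Finset.mem_univ i)
  have hMm : a j1 + 2 ≤ a i1 := by
    have := hmax' i0; have := hmin' j0; omega
  have hne1 : i1 ≠ j1 := by intro e; rw [e] at hMm; omega
  have hm1 : 1 ≤ a j1 := Nat.pos_of_ne_zero (hz j1)
  -- n ≤ h * c
  have hcn : n ≤ h * c := by
    have h1 := Nat.div_add_mod (n + h - 1) h
    have h2 : (n + h - 1) % h < h := Nat.mod_lt _ (by omega)
    rw [hc] at h1
    omega
  -- M ≥ c
  have hMc : c ≤ a i1 := by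
    have h1 : n ≤ h * a i1 := by
      rw [← hsum]
      calc ∑ i, a i ≤ ∑ _i : Fin h, a i1 := Finset.sum_le_sum (fun i _ => hmax' i)
        _ = h * a i1 := by rw [Finset.sum_const, Finset.card_univ, Fintype.card_fin, smul_eq_mul]
    rw [← hc]
    have h3 : n + h - 1 < (a i1 + 1) * h := by
      have e : (a i1 + 1) * h = h * a i1 + h := by ring
      omega
    have := (Nat.div_lt_iff_lt_mul (by omega : 0 < h)).mpr h3
    omega
  -- m + 1 ≤ c
  have hmc : a j1 + 1 ≤ c := by
    by_contra hcon
    push_neg at hcon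
    have h1 : h * c + 2 ≤ n := by
      rw [← hsum, ← Finset.add_sum_erase _ a (Finset.mem_univ i1)]
      have h2 : ∑ x ∈ Finset.univ.erase i1, a j1 ≤ ∑ x ∈ Finset.univ.erase i1, a x :=
        Finset.sum_le_sum (fun i _ => hmin' i)
      rw [Finset.sum_const, Finset.card_erase_of_mem (Finset.mem_univ i1), Finset.card_univ,
        Fintype.card_fin, smul_eq_mul] at h2
      have h4 : c ≤ a j1 := by omega
      have h5 : (h - 1) * c ≤ (h-1) * a j1 := Nat.mul_le_mul_left _ h4
      have h6 : (h-1)*c + c = h * c := by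
        have : h - 1 + 1 = h := by omega
        calc (h-1)*c + c = (h-1+1)*c := by ring
          _ = h * c := by rw [this]
      have h7 : c + 2 ≤ a i1 := by omega
      omega
    omega
  -- the swapped partition
  set a' := Function.update (Function.update a i1 (a i1 - 1)) j1 (a j1 + 1) with ha'
  have hai' : a' i1 = a i1 - 1 := by
    rw [ha', Function.update_of_ne hne1, Function.update_self]
  have haj' : a' j1 = a j1 + 1 := by rw [ha', Function.update_self]
  have hrest : ∀ x, x ≠ i1 → x ≠ j1 → a' x = a x := by
    intro x hxi hxj
    rw [ha', Function.update_of_ne hxj, Function.update_of_ne hxi]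
  have hjmem : j1 ∈ Finset.univ.erase i1 := Finset.mem_erase.mpr ⟨Ne.symm hne1, Finset.mem_univ j1⟩
  have hsamerest : ∑ x ∈ (Finset.univ.erase i1).erase j1, a' x
      = ∑ x ∈ (Finset.univ.erase i1).erase j1, a x := by
    apply Finset.sum_congr rfl
    intro x hx
    have hx1 := Finset.mem_erase.mp hx
    have hx2 := Finset.mem_erase.mp hx1.2
    exact hrest x hx2.1 hx1.1
  have hsum' : ∑ x, a' x = n := by
    rw [← Finset.add_sum_erase _ a' (Finset.mem_univ i1), ← Finset.add_sum_erase _ a' hjmem,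
      hsamerest, hai', haj']
    rw [← Finset.add_sum_erase _ a (Finset.mem_univ i1), ← Finset.add_sum_erase _ a hjmem] at hsum
    omega
  have hprod' : ∏ x, a' x ≤ fpart n h := by
    have := prod_le_fpart h hh (∑ x, (a' x)^2) a' le_rfl
    rwa [hsum'] at this
  -- decompositions
  obtain ⟨R, hR⟩ : ∃ R, ∏ x ∈ (Finset.univ.erase i1).erase j1, a x = R := ⟨_, rfl⟩
  have hPa : ∏ x, a x = a i1 * (a j1 * R) := by
    rw [← Finset.mul_prod_erase _ a (Finset.mem_univ i1), ← Finset.mul_prod_erase _ a hjmem, hR]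
  have hPa' : ∏ x, a' x = (a i1 - 1) * ((a j1 + 1) * R) := by
    rw [← Finset.mul_prod_erase _ a' (Finset.mem_univ i1), ← Finset.mul_prod_erase _ a' hjmem,
      hai', haj']
    congr 1
    congr 1
    rw [← hR]
    apply Finset.prod_congr rfl
    intro x hx
    have hx1 := Finset.mem_erase.mp hx
    have hx2 := Finset.mem_erase.mp hx1.2
    exact hrest x hx2.1 hx1.1
  -- key inequality scaled by R
  have hkey := key_ineq c (a i1) (a j1) hm1 hmc hMm hMc
  have hkeyR : c^2 * (∏ x, a x) ≤ (c^2 - 1) * (∏ x, a' x) := by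
    rw [hPa, hPa']
    calc c^2 * (a i1 * (a j1 * R)) = (c^2 * (a i1 * a j1)) * R := by ring
      _ ≤ ((c^2 - 1) * ((a i1 - 1) * (a j1 + 1))) * R := Nat.mul_le_mul_right R hkey
      _ = (c^2 - 1) * ((a i1 - 1) * ((a j1 + 1) * R)) := by ring
  have hfinal : c^2 * (∏ x, a x) ≤ (c^2 - 1) * fpart n h :=
    le_trans hkeyR (Nat.mul_le_mul_left _ hprod')
  -- cast to ℝ
  have h1c : 1 ≤ c^2 := by nlinarith
  have hcast : ((c:ℝ))^2 * (∏ x, a x : ℕ) ≤ ((c:ℝ)^2 - 1) * (fpart n h : ℕ) := by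
    have h1 : ((c^2 * (∏ x, a x) : ℕ) : ℝ) ≤ (((c^2 - 1) * fpart n h : ℕ) : ℝ) :=
      Nat.cast_le.mpr hfinal
    push_cast [h1c] at h1 ⊢
    exact h1
  have hc2 : (0:ℝ) < (c:ℝ)^2 := by linarith
  have hrw : (1 : ℝ) - 1/((c:ℝ))^2 = ((c:ℝ)^2 - 1)/((c:ℝ))^2 := by
    field_simp
  rw [hrw, mul_div_assoc', le_div_iff₀ hc2]
  linarith [hcast]
end

section
/- For positive integers h ≥ 2 and k ≥ 1, g(h^k, h) = Σ_{i=1}^{k} h^{(k-1)h - (i-1)(h-1)} = h^{h(k-1)}·(1 - h^{k(1-h)})/(1 - h^{1-h}). -/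
/-- `g(n,h) = 0` for `n < h`; `g(n,h) = f(n,h) + ∑ g(aᵢ,h)` over an equitable
`(h,n)`-partition otherwise (stated for `h ≥ 2`). -/
def gval (h n : ℕ) : ℕ :=
  if hc : 2 ≤ h ∧ h ≤ n then
    fpart n h + (n % h) * gval h ((n + h - 1) / h) + (h - n % h) * gval h (n / h)
  else 0
termination_by n
decreasing_by
  · have h2 : 2 ≤ h := hc.1
    have hn : h ≤ n := hc.2
    have hm : n * 2 ≤ n * h := Nat.mul_le_mul (le_refl n) h2
    exact (Nat.div_lt_iff_lt_mul (by omega)).mpr (by omega)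
  · exact Nat.div_lt_self (by omega) (by omega)

lemma grec (h : ℕ) (hh : 2 ≤ h) (k : ℕ) :
    gval h (h ^ (k + 1)) = h ^ (k * h) + h * gval h (h ^ k) := by
  have h0 : 0 < h := by omega
  have hdiv : h ^ (k + 1) / h = h ^ k := by
    rw [pow_succ, Nat.mul_div_cancel _ h0]
  have hmod : h ^ (k + 1) % h = 0 := by
    rw [pow_succ, Nat.mul_mod_left]
  have hceil : (h ^ (k + 1) + h - 1) / h = h ^ k := by
    have : h ^ (k + 1) + h - 1 = h * h ^ k + (h - 1) := by rw [pow_succ]; ring_nf; omega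
    rw [this, Nat.mul_add_div h0, Nat.div_eq_of_lt (by omega)]
    omega
  have hle : h ≤ h ^ (k + 1) := by
    calc h = h ^ 1 := (pow_one h).symm
    _ ≤ h ^ (k + 1) := Nat.pow_le_pow_right h0 (by omega)
  rw [gval, dif_pos ⟨hh, hle⟩, hmod, hdiv, hceil]
  simp [fpart, hmod, hdiv, hceil, pow_mul]

lemma g0 (h : ℕ) (hh : 2 ≤ h) : gval h 1 = 0 := by
  rw [gval, dif_neg (by omega)]

lemma gsum (h : ℕ) (hh : 2 ≤ h) (k : ℕ) :
    gval h (h ^ k) = ∑ i ∈ Finset.range k, h ^ ((k - 1) * h - i * (h - 1)) := by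
  induction k with
  | zero => simp [pow_zero, g0 h hh]
  | succ k ih =>
    rw [grec h hh k, ih, Finset.sum_range_succ', Finset.mul_sum,
      Nat.add_sub_cancel, Nat.add_comm]
    congr 1
    · apply Finset.sum_congr rfl
      intro i hi
      have hik : i < k := Finset.mem_range.mp hi
      have hle : i * (h - 1) ≤ (k - 1) * h := by
        calc i * (h - 1) ≤ (k - 1) * (h - 1) := Nat.mul_le_mul_right _ (by omega)
        _ ≤ (k - 1) * h := Nat.mul_le_mul_left _ (by omega)
      have e1 : k * h = (k - 1) * h + h := by
        cases k with
        | zero => omega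
        | succ m => rw [Nat.succ_mul]; simp
      have e2 : (i + 1) * (h - 1) = i * (h - 1) + (h - 1) := by rw [Nat.succ_mul]
      have e3 : k * h - (i + 1) * (h - 1) = ((k - 1) * h - i * (h - 1)) + 1 := by omega
      rw [e3, pow_succ]
      ring
    · simp

/-- g(h^k,h) = Σ_{i=1}^{k} h^{(k-1)h - (i-1)(h-1)}
  = h^{h(k-1)}·(1 - h^{k(1-h)})/(1 - h^{1-h}) for h ≥ 2, k ≥ 1. -/
theorem stmt3 (h k : ℕ) (hh : 2 ≤ h) (hk : 1 ≤ k) :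
    (gval h (h ^ k) : ℝ) = ∑ i ∈ Finset.range k, (h : ℝ) ^ ((k - 1) * h - i * (h - 1)) ∧
    (gval h (h ^ k) : ℝ) =
      (h : ℝ) ^ (h * (k - 1)) * (1 - (h : ℝ) ^ ((k : ℤ) * (1 - (h : ℤ)))) /
        (1 - (h : ℝ) ^ ((1 : ℤ) - (h : ℤ))) := by
  have h1 : (gval h (h ^ k) : ℝ) = ∑ i ∈ Finset.range k, (h : ℝ) ^ ((k - 1) * h - i * (h - 1)) := by
    rw [gsum h hh k]; push_cast; rfl
  refine ⟨h1, ?_⟩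
  rw [h1]
  have hR : (1:ℝ) < (h:ℝ) := by exact_mod_cast by omega
  have hne : (h:ℝ) ≠ 0 := by positivity
  set r : ℝ := (h : ℝ) ^ ((1 : ℤ) - (h : ℤ)) with hr
  have hrne : r ≠ 1 := by
    have : r = ((h:ℝ) ^ (h - 1 : ℕ))⁻¹ := by
      rw [hr, ← zpow_natCast (h:ℝ) (h-1), ← zpow_neg]
      congr 1
      omega
    rw [this]
    have h2 : (1:ℝ) < (h:ℝ) ^ (h - 1 : ℕ) := one_lt_pow₀ hR (by omega)
    intro hcon
    have := inv_eq_one.mp hcon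
    linarith
  have hterm : ∀ i ∈ Finset.range k,
      (h : ℝ) ^ ((k - 1) * h - i * (h - 1)) = (h:ℝ) ^ ((k-1)*h) * r ^ i := by
    intro i hi
    have hik : i < k := Finset.mem_range.mp hi
    have hle : i * (h - 1) ≤ (k - 1) * h := by
      calc i * (h - 1) ≤ (k - 1) * (h - 1) := Nat.mul_le_mul_right _ (by omega)
      _ ≤ (k - 1) * h := Nat.mul_le_mul_left _ (by omega)
    rw [hr, ← zpow_natCast (h:ℝ) ((k-1)*h - i*(h-1)), ← zpow_natCast (h:ℝ) ((k-1)*h),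
      ← zpow_natCast _ i, ← zpow_mul, ← zpow_add₀ hne]
    congr 1
    rw [Nat.cast_sub hle, Nat.cast_mul, Nat.cast_mul, Nat.cast_sub (show 1 ≤ h by omega)]
    push_cast
    ring
  rw [Finset.sum_congr rfl hterm, ← Finset.mul_sum, geom_sum_eq hrne]
  have hrk : r ^ k = (h : ℝ) ^ ((k : ℤ) * (1 - (h : ℤ))) := by
    rw [hr, ← zpow_natCast _ k, ← zpow_mul]
    congr 1
    ring
  rw [hrk, mul_comm h (k - 1)]
  have h1r : r - 1 ≠ 0 := sub_ne_zero.mpr hrne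
  have h1r' : 1 - r ≠ 0 := sub_ne_zero.mpr (Ne.symm hrne)
  field_simp
  ring
end

section
/- For positive integers h and n with h ≤ n ≤ h(h-1), g(n,h) = f(n,h); and for n > h(h-1), g(n,h) > f(n,h). -/
lemma gval_eq (h n : ℕ) (hh : 2 ≤ h) (hn : h ≤ n) :
    gval h n = fpart n h + (n % h) * gval h ((n + h - 1) / h)
      + (h - n % h) * gval h (n / h) := by
  rw [gval]; simp [hh, hn]

lemma gval_zero (h n : ℕ) (hn : n < h) : gval h n = 0 := by
  rw [gval]; simp; omega

lemma fpart_pos (h n : ℕ) (hh : 2 ≤ h) (hn : h ≤ n) : 1 ≤ fpart n h := by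
  have h1 : 1 ≤ n / h := Nat.one_le_div_iff (by omega) |>.mpr hn
  have h2 : 1 ≤ (n + h - 1) / h := Nat.one_le_div_iff (by omega) |>.mpr (by omega)
  exact Nat.one_le_iff_ne_zero.mpr (Nat.mul_ne_zero (pow_ne_zero _ (by omega)) (pow_ne_zero _ (by omega)))

lemma hsq (h : ℕ) (hh : 1 ≤ h) : h * (h - 1) + h = h * h := by
  cases h with
  | zero => omega
  | succ k => simp [Nat.succ_sub_one]; ring

lemma gval_pos (h n : ℕ) (hh : 2 ≤ h) (hn : h ≤ n) : 1 ≤ gval h n := by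
  rw [gval_eq h n hh hn]
  have := fpart_pos h n hh hn
  omega

/-- for h ≤ n ≤ h(h-1), g(n,h) = f(n,h); for n > h(h-1), g(n,h) > f(n,h). -/
theorem stmt4 (h n : ℕ) (hh : 2 ≤ h) (hn : 1 ≤ n) :
    (h ≤ n → n ≤ h * (h - 1) → gval h n = fpart n h) ∧
    (h * (h - 1) < n → fpart n h < gval h n) := by
  constructor
  · intro h1 h2
    have hc : (n + h - 1) / h < h := by
      have : n + h - 1 < h * h := by
        have e := hsq h (by omega)
        omega
      exact Nat.div_lt_of_lt_mul (by omega)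
    have hf : n / h < h := Nat.lt_of_le_of_lt (Nat.div_le_div_right (by omega)) hc
    rw [gval_eq h n hh h1, gval_zero h _ hc, gval_zero h _ hf]
    simp
  · intro h3
    have e := hsq h (by omega)
    have h1 : h ≤ n := by nlinarith
    rw [gval_eq h n hh h1]
    have key : 1 ≤ (n % h) * gval h ((n + h - 1) / h) + (h - n % h) * gval h (n / h) := by
      rcases Nat.eq_zero_or_pos (n % h) with hr | hr
      · -- h ∣ n, so n ≥ h*h, n/h ≥ h
        have hd : h ∣ n := Nat.dvd_of_mod_eq_zero hr
        have hge : h * h ≤ n := by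
          obtain ⟨k, hk⟩ := hd
          have : h ≤ k := by nlinarith
          nlinarith
        have : h ≤ n / h := Nat.le_div_iff_mul_le (by omega) |>.mpr (by omega)
        have := gval_pos h (n / h) hh this
        have : 1 ≤ (h - n % h) * gval h (n / h) :=
          Nat.one_le_iff_ne_zero.mpr (Nat.mul_ne_zero (by omega) (by omega))
        omega
      · -- ceil ≥ h
        have hge : h * h ≤ n + h - 1 := by omega
        have : h ≤ (n + h - 1) / h := Nat.le_div_iff_mul_le (by omega) |>.mpr (by omega)
        have := gval_pos h ((n + h - 1) / h) hh this
        have : 1 ≤ (n % h) * gval h ((n + h - 1) / h) :=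
          Nat.one_le_iff_ne_zero.mpr (Nat.mul_ne_zero (by omega) (by omega))
        omega
    omega
end

section
/- Let f be a bijection between finite sets A and B, each of size s, with no stationary points (f(a) ≠ a for all a ∈ A). Then there exist at least ⌈s/3⌉ pairs (a_1, f(a_1)), ..., (a_t, f(a_t)) with a_i ∈ A, such that all 2t elements a_1, f(a_1), ..., a_t, f(a_t) are distinct. -/
/-- Auxiliary greedy lemma: only injectivity on `A` is needed. -/
theorem stmt6_aux {α : Type*} [DecidableEq α] (f : α → α) :
    ∀ s : ℕ, ∀ A : Finset α, A.card = s → Set.InjOn f (A : Set α) →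
      (∀ a ∈ A, f a ≠ a) →
      ∃ T ⊆ A, (s + 2) / 3 ≤ T.card ∧ (T ∪ T.image f).card = 2 * T.card := by
  intro s
  induction s using Nat.strong_induction_on with
  | _ s ih =>
    intro A hA hinj hns
    rcases Nat.eq_zero_or_pos s with hs | hs
    · subst hs
      exact ⟨∅, by simp, by norm_num, by simp⟩
    · have hne : A.Nonempty := by
        rw [← Finset.card_pos, hA]; exact hs
      obtain ⟨a, haA⟩ := hne
      set S : Finset α := insert a (insert (f a) (A.filter fun x => f x = a)) with hS
      have hfilter : (A.filter fun x => f x = a).card ≤ 1 := by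
        apply Finset.card_le_one.2
        intro x hx y hy
        simp only [Finset.mem_filter] at hx hy
        exact hinj hx.1 hy.1 (hx.2.trans hy.2.symm)
      have hScard : S.card ≤ 3 := by
        calc S.card ≤ (insert (f a) (A.filter fun x => f x = a)).card + 1 :=
              Finset.card_insert_le _ _
          _ ≤ ((A.filter fun x => f x = a).card + 1) + 1 := by
              have := Finset.card_insert_le (f a) (A.filter fun x => f x = a)
              omega
          _ ≤ 3 := by omega
      set A' : Finset α := A \ S with hA'
      have hA'sub : A' ⊆ A := Finset.sdiff_subset
      have hcard_ge : s - 3 ≤ A'.card := by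
        have h1 : A.card - S.card ≤ A'.card := Finset.le_card_sdiff _ _
        omega
      have haS : a ∈ S := Finset.mem_insert_self _ _
      have haA' : a ∉ A' := fun h => (Finset.mem_sdiff.1 h).2 haS
      have hcard_lt : A'.card < s := by
        rw [← hA]
        exact Finset.card_lt_card ⟨hA'sub, fun h => haA' (h haA)⟩
      obtain ⟨T', hT'A, hT'card, hT'union⟩ :=
        ih A'.card hcard_lt A' rfl
          (hinj.mono (by exact_mod_cast hA'sub))
          (fun x hx => hns x (hA'sub hx))
      have hT'subA : T' ⊆ A := hT'A.trans hA'sub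
      have himg : (T'.image f).card = T'.card :=
        Finset.card_image_of_injOn (hinj.mono (by exact_mod_cast hT'subA))
      have hinter : (T' ∩ T'.image f).card = 0 := by
        have := Finset.card_union_add_card_inter T' (T'.image f)
        omega
      -- key memberships
      have haT' : a ∉ T' := fun h => haA' (hT'A h)
      have hfaT' : f a ∉ T' := fun h => by
        have := Finset.mem_sdiff.1 (hT'A h)
        exact this.2 (Finset.mem_insert_of_mem (Finset.mem_insert_self _ _))
      have haI : a ∉ T'.image f := by
        intro h
        obtain ⟨x, hx, hfx⟩ := Finset.mem_image.1 h
        have hxA' := hT'A hx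
        have : x ∈ S := Finset.mem_insert_of_mem (Finset.mem_insert_of_mem
          (Finset.mem_filter.2 ⟨hT'subA hx, hfx⟩))
        exact (Finset.mem_sdiff.1 hxA').2 this
      have hfaI : f a ∉ T'.image f := by
        intro h
        obtain ⟨x, hx, hfx⟩ := Finset.mem_image.1 h
        have : x = a := hinj (hT'subA hx) haA hfx
        exact haT' (this ▸ hx)
      have hafa : a ≠ f a := (hns a haA).symm
      refine ⟨insert a T', ?_, ?_, ?_⟩
      · exact Finset.insert_subset haA hT'subA
      · rw [Finset.card_insert_of_notMem haT']
        omega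
      · rw [Finset.image_insert]
        have hrw : insert a T' ∪ insert (f a) (T'.image f)
            = insert a (insert (f a) (T' ∪ T'.image f)) := by
          ext x
          simp only [Finset.mem_insert, Finset.mem_union]
          tauto
        rw [hrw, Finset.card_insert_of_notMem, Finset.card_insert_of_notMem,
          hT'union, Finset.card_insert_of_notMem haT']
        · ring
        · simp only [Finset.mem_union]
          tauto
        · simp only [Finset.mem_insert, Finset.mem_union]
          tauto

/-- a bijection `f : A → B` between finite sets of size `s` with no
stationary points admits at least ⌈s/3⌉ pairs (a, f a) with all 2t elements distinct. -/
theorem stmt6 {α : Type*} [DecidableEq α] (A B : Finset α) (s : ℕ)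
    (hA : A.card = s) (hB : B.card = s) (f : α → α)
    (hbij : Set.BijOn f (A : Set α) (B : Set α))
    (hnostat : ∀ a ∈ A, f a ≠ a) :
    ∃ T ⊆ A, (s + 2) / 3 ≤ T.card ∧ (T ∪ T.image f).card = 2 * T.card := by
  exact stmt6_aux f s A hA hbij.injOn hnostat
end

section
/- Let H be a graph on h vertices. If H has a set Q of vertices that is distinguishing (no two distinct vertices outside Q have Q entirely contained in their agreement set), then any two induced copies F_1, F_2 of H in a graph G that agree on Q (i.e., F_1(x) = F_2(x) for all x ∈ Q) are role-consistent: for every vertex v in the intersection of their images, F_1^{-1}(v) = F_2^{-1}(v). -/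
/-- two induced copies of `H` in `G` agreeing on a distinguishing set `Q`
are role-consistent. -/
theorem stmt7 {V W : Type*} (H : SimpleGraph V) (G : SimpleGraph W) (Q : Set V)
    (hQ : ∀ u v : V, u ∉ Q → v ∉ Q → u ≠ v → ∃ w ∈ Q, ¬(H.Adj u w ↔ H.Adj v w))
    (F₁ F₂ : V → W)
    (hF₁inj : Function.Injective F₁) (hF₂inj : Function.Injective F₂)
    (hF₁adj : ∀ u v : V, H.Adj u v ↔ G.Adj (F₁ u) (F₁ v))
    (hF₂adj : ∀ u v : V, H.Adj u v ↔ G.Adj (F₂ u) (F₂ v))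
    (hagree : ∀ x ∈ Q, F₁ x = F₂ x) :
    ∀ u v : V, F₁ u = F₂ v → u = v := by
  intro u v huv
  by_contra hne
  by_cases hu : u ∈ Q
  · exact hne (hF₂inj ((hagree u hu).symm.trans huv))
  by_cases hv : v ∈ Q
  · exact hne (hF₁inj (huv.trans (hagree v hv).symm))
  obtain ⟨w, hw, hnw⟩ := hQ u v hu hv hne
  apply hnw
  rw [hF₁adj u w, hF₂adj v w, huv, hagree w hw]
end

section
/- If H ∈ P_h is strongly asymmetric, then H is asymmetric (its only automorphism is the identity). In particular: if every pair of distinct vertices of an h-vertex graph H has agreement set of size at most 0.55h, and every automorphism of H has at most 0.1h non-stationary points, and h ≥ 10, then H has only the trivial automorphism. -/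
/-- The agreement set of a set `S` of vertices: vertices outside `S` adjacent to all of
`S` or to none of `S`. -/
def agreeSet {h : ℕ} (H : SimpleGraph (Fin h)) [DecidableRel H.Adj]
    (S : Finset (Fin h)) : Finset (Fin h) :=
  Finset.univ.filter (fun w => w ∉ S ∧ ((∀ s ∈ S, H.Adj w s) ∨ (∀ s ∈ S, ¬ H.Adj w s)))

/-- if every pair of distinct vertices of an `h`-vertex graph `H` has
agreement set of size at most `0.55h`, every automorphism of `H` has at most `0.1h`
non-stationary points, and `h ≥ 10`, then `H` is asymmetric: its only automorphism is
the identity. -/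
theorem stmt9 {h : ℕ} (H : SimpleGraph (Fin h)) [DecidableRel H.Adj] (hh : 10 ≤ h)
    (hpair : ∀ u v : Fin h, u ≠ v → ((agreeSet H {u, v}).card : ℝ) ≤ 0.55 * h)
    (hauto : ∀ π : H ≃g H,
      (((Finset.univ.filter (fun v : Fin h => π v ≠ v)).card : ℝ)) ≤ 0.1 * h) :
    ∀ π : H ≃g H, ∀ v : Fin h, π v = v := by
  intro π v
  by_contra hv
  have hne : v ≠ π v := fun hvv => hv hvv.symm
  set F : Finset (Fin h) := Finset.univ.filter (fun w => π w = w) with hF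
  set M : Finset (Fin h) := Finset.univ.filter (fun w : Fin h => π w ≠ w) with hM
  set t : Finset (Fin h) := {v, π v} with ht
  -- fixed points outside {v, π v} belong to the agreement set
  have hsub : F \ t ⊆ agreeSet H t := by
    intro w hw
    rw [Finset.mem_sdiff, hF, Finset.mem_filter] at hw
    obtain ⟨⟨-, hfix⟩, hwt⟩ := hw
    have hiff : H.Adj w v ↔ H.Adj w (π v) := by
      have := π.map_adj_iff (v := w) (w := v)
      rw [hfix] at this
      exact this.symm
    simp only [agreeSet, Finset.mem_filter, Finset.mem_univ, true_and]
    refine ⟨hwt, ?_⟩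
    by_cases hA : H.Adj w v
    · left
      intro s hs
      rw [ht, Finset.mem_insert, Finset.mem_singleton] at hs
      rcases hs with rfl | rfl
      · exact hA
      · exact hiff.mp hA
    · right
      intro s hs
      rw [ht, Finset.mem_insert, Finset.mem_singleton] at hs
      rcases hs with rfl | rfl
      · exact hA
      · exact fun h' => hA (hiff.mpr h')
  have hcard1 : F.card ≤ (F \ t).card + 2 := by
    have := Finset.card_le_card_sdiff_add_card (s := F) (t := t)
    have htc : t.card ≤ 2 := by
      rw [ht]
      exact (Finset.card_insert_le _ _).trans (by simp)
    omega
  have hcard2 : (F \ t).card ≤ (agreeSet H t).card := Finset.card_le_card hsub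
  have hpart : F.card + M.card = h := by
    have := Finset.card_filter_add_card_filter_not
      (s := (Finset.univ : Finset (Fin h))) (p := fun w : Fin h => π w = w)
    simpa [hF, hM] using this
  have hMle := hauto π
  have hag := hpair v (π v) hne
  have hagt : ((agreeSet H t).card : ℝ) ≤ 0.55 * h := hag
  have hhR : (10 : ℝ) ≤ (h : ℝ) := by exact_mod_cast hh
  have h1 : (F.card : ℝ) ≤ ((F \ t).card : ℝ) + 2 := by exact_mod_cast hcard1
  have h2 : ((F \ t).card : ℝ) ≤ ((agreeSet H t).card : ℝ) := by exact_mod_cast hcard2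
  have h3 : (F.card : ℝ) + (M.card : ℝ) = (h : ℝ) := by exact_mod_cast hpart
  have hMle' : (M.card : ℝ) ≤ 0.1 * h := hMle
  linarith
end

section
/- Consider the following discrete process: start with an equitable partition of n ≥ h elements into h parts, designate the largest k parts (0 < k < h), and suppose t ≥ k⌈n/h⌉. Repeatedly move single elements from non-designated to designated parts, keeping both groups internally equitable, until the designated parts contain exactly t elements. Then the final product of all part sizes is at most f(n,h)·(1 - 1/⌈n/h⌉ + 1/⌊t/(2k)⌋)^{(t - k⌈n/h⌉)/2}, where f(n,h) is the product of the part sizes of an equitable partition of n into h parts. -/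
theorem fpart_mul_add {k r : ℕ} (q : ℕ) (hr : r < k) :
    fpart (k * q + r) k = (q + 1) ^ r * q ^ (k - r) := by
  have hk : 0 < k := by omega
  have hmod : (k * q + r) % k = r := by rw [Nat.mul_add_mod, Nat.mod_eq_of_lt hr]
  have hdiv : (k * q + r) / k = q := by rw [Nat.mul_add_div hk, Nat.div_eq_of_lt hr, add_zero]
  rcases Nat.eq_zero_or_pos r with rfl | hr0
  · rw [add_zero] at hmod hdiv ⊢
    simp [fpart, hmod, hdiv]
  · have hceil : (k * q + r + k - 1) / k = q + 1 := by
      rw [show k * q + r + k - 1 = k * (q + 1) + (r - 1) by rw [mul_add]; omega,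
        Nat.mul_add_div hk, Nat.div_eq_of_lt (by omega), add_zero]
    rw [fpart, hmod, hdiv, hceil]

theorem fpart_zero {g : ℕ} (hg : 0 < g) : fpart 0 g = 0 :=
  (fpart_mul_add 0 hg).trans (by simp [hg.ne'])

theorem fpart_succ_mul_div {k : ℕ} (hk : 0 < k) (u : ℕ) :
    fpart (u + 1) k * (u / k) = fpart u k * (u / k + 1) := by
  obtain ⟨q, r, hr, rfl⟩ : ∃ q r, r < k ∧ u = k * q + r :=
    ⟨u / k, u % k, Nat.mod_lt _ hk, (Nat.div_add_mod u k).symm⟩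
  rw [Nat.mul_add_div hk, Nat.div_eq_of_lt hr, add_zero, fpart_mul_add q hr, add_assoc]
  rcases Nat.lt_or_ge (r + 1) k with hr1 | hr1
  · rw [fpart_mul_add q hr1, show k - r = k - (r + 1) + 1 by omega]
    ring
  · obtain rfl : k = r + 1 := by omega
    rw [show (r + 1) * q + (r + 1) = (r + 1) * (q + 1) + 0 by ring, fpart_mul_add (q + 1) hk,
      Nat.sub_zero, Nat.add_sub_cancel_left, pow_succ]
    ring

-- `1 / 0 = 0` in `ℝ`, so for `q = 0` the bound only holds because `c = 1` forces `B = 0`.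
theorem exchange_ratio_le {b B c q : ℕ} (hBc : B + 1 ≤ c) (hcb : c ≤ b) (hqb : q ≤ b)
    (hq : 0 < q ∨ c = 1) : ((b + 1) * B : ℝ) ≤ (1 - 1 / c + 1 / q) * (b * (B + 1)) := by
  rcases hq with hq | rfl
  · have hb : (0 : ℝ) < b := by norm_cast; omega
    have hexact : (1 - 1 / ((B : ℝ) + 1) + 1 / b) * (b * (B + 1)) = (b + 1) * B + 1 := by
      field_simp
      ring
    calc ((b + 1) * B : ℝ) ≤ (1 - 1 / ((B : ℝ) + 1) + 1 / b) * (b * (B + 1)) := by linarith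
      _ ≤ (1 - 1 / c + 1 / q) * (b * (B + 1)) := by
        gcongr
        exact_mod_cast hBc
  · obtain rfl : B = 0 := by omega
    simp only [Nat.cast_zero, mul_zero, Nat.cast_one, div_one, sub_self, zero_add]
    positivity

theorem one_sub_one_div_add_one_div_nonneg (c q : ℕ) : (0 : ℝ) ≤ 1 - 1 / c + 1 / q := by
  simp only [one_div]
  linarith [Nat.cast_inv_le_one (α := ℝ) c, inv_nonneg.2 (Nat.cast_nonneg (α := ℝ) q)]

theorem pos_or_eq_one_of_mul_le {k c t : ℕ} (hk : 0 < k) (hc : 0 < c) (hct : k * c ≤ t) :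
    0 < t / (2 * k) ∨ c = 1 := by
  refine (Nat.eq_zero_or_pos (t / (2 * k))).symm.imp_right fun hq ↦ ?_
  have h2k : t < 2 * k := by simpa [hk.ne'] using Nat.div_eq_zero_iff.1 hq
  have : c < 2 := Nat.lt_of_mul_lt_mul_left (a := k) (by omega)
  omega

-- part-size product with `s` of the `n` elements equitably in `k` parts, the rest in `g` parts
def fpartSplit (n s k g : ℕ) : ℕ := fpart s k * fpart (n - s) g

theorem fpartSplit_succ_mul {n s k g : ℕ} (hk : 0 < k) (hg : 0 < g) (hs : s < n) :
    fpartSplit n (s + 1) k g * (s / k * ((n - (s + 1)) / g + 1)) =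
      fpartSplit n s k g * ((s / k + 1) * ((n - (s + 1)) / g)) := by
  have hdesignated := fpart_succ_mul_div hk s
  have hrest := fpart_succ_mul_div hg (n - (s + 1))
  rw [show n - (s + 1) + 1 = n - s by omega] at hrest
  unfold fpartSplit
  calc fpart (s + 1) k * fpart (n - (s + 1)) g * (s / k * ((n - (s + 1)) / g + 1))
      = fpart (s + 1) k * (s / k) * (fpart (n - (s + 1)) g * ((n - (s + 1)) / g + 1)) := by ring
    _ = fpart s k * (s / k + 1) * (fpart (n - s) g * ((n - (s + 1)) / g)) := by
      rw [hdesignated, hrest]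
    _ = _ := by ring

theorem fpartSplit_succ_le_mul {n s k g c q : ℕ} (hk : 0 < k) (hg : 0 < g) (hsn : s < n)
    (hcs : k * c ≤ s) (hqs : k * q ≤ s) (hnc : n ≤ c * (k + g)) (hq : 0 < q ∨ c = 1) :
    (fpartSplit n (s + 1) k g : ℝ) ≤ (1 - 1 / c + 1 / q) * fpartSplit n s k g := by
  have hBc : (n - (s + 1)) / g + 1 ≤ c :=
    (Nat.div_lt_iff_lt_mul hg).2 (by rw [mul_add, mul_comm c k] at hnc; omega)
  have hcb : c ≤ s / k := (Nat.le_div_iff_mul_le hk).2 (by rwa [mul_comm])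
  have hqb : q ≤ s / k := (Nat.le_div_iff_mul_le hk).2 (by rwa [mul_comm])
  have hid := fpartSplit_succ_mul hk hg hsn
  generalize s / k = b at hcb hqb hid
  generalize (n - (s + 1)) / g = B at hBc hid
  have hpos : (0 : ℝ) < b * (B + 1) := by
    have : 0 < b := by omega
    positivity
  refine le_of_mul_le_mul_right ?_ hpos
  calc (fpartSplit n (s + 1) k g : ℝ) * (b * (B + 1)) = fpartSplit n s k g * ((b + 1) * B) := by
        exact_mod_cast hid
    _ ≤ fpartSplit n s k g * ((1 - 1 / c + 1 / q) * (b * (B + 1))) :=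
      mul_le_mul_of_nonneg_left (exchange_ratio_le hBc hcb hqb hq) (Nat.cast_nonneg _)
    _ = (1 - 1 / c + 1 / q) * fpartSplit n s k g * (b * (B + 1)) := by ring

theorem fpartSplit_le_pow_mul {n t k g c : ℕ} (hk : 0 < k) (hg : 0 < g) (hct : k * c ≤ t)
    (htn : t ≤ n) (hnc : n ≤ c * (k + g)) :
    (fpartSplit n t k g : ℝ) ≤ (1 - 1 / c + 1 / (t / (2 * k) : ℕ)) ^ ((t - k * c) / 2) *
      fpartSplit n (t - (t - k * c) / 2) k g := by
  set m := (t - k * c) / 2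
  have hm : m * 2 ≤ t - k * c := Nat.div_mul_le_self _ 2
  have hqt : 2 * (k * (t / (2 * k))) ≤ t :=
    calc 2 * (k * (t / (2 * k))) = t / (2 * k) * (2 * k) := by ring
      _ ≤ t := Nat.div_mul_le_self t (2 * k)
  have hstep : ∀ i < m, (fpartSplit n (t - m + i + 1) k g : ℝ) ≤
      (1 - 1 / c + 1 / (t / (2 * k) : ℕ)) * fpartSplit n (t - m + i) k g := by
    intro i hi
    have hc : 0 < c := Nat.pos_of_ne_zero fun hc ↦ by simp [hc] at hnc; omega
    exact fpartSplit_succ_le_mul hk hg (by omega) (by omega) (by omega) hnc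
      (pos_or_eq_one_of_mul_le hk hc hct)
  simpa [Nat.sub_add_cancel (by omega : m ≤ t)] using
    le_geom (u := fun i ↦ (fpartSplit n (t - m + i) k g : ℝ))
      (one_sub_one_div_add_one_div_nonneg c _) m hstep

-- the total size of the `k` largest parts of an equitable partition of `n` into `h` parts
def largestPartsSum (n h k : ℕ) : ℕ := k * (n / h) + min (n % h) k

section

variable {n h k : ℕ}

theorem largestPartsSum_le_mul_ceil (hh : 0 < h) :
    largestPartsSum n h k ≤ k * ((n + h - 1) / h) := by
  have hn := Nat.div_add_mod n h
  rcases Nat.eq_zero_or_pos (n % h) with hρ | hρ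
  · rw [largestPartsSum, hρ, Nat.zero_min, add_zero]
    exact Nat.mul_le_mul_left k (Nat.div_le_div_right (by omega))
  · have hceil : n / h + 1 ≤ (n + h - 1) / h :=
      (Nat.le_div_iff_mul_le hh).2 (by rw [add_one_mul, mul_comm]; omega)
    calc largestPartsSum n h k ≤ k * (n / h + 1) := by rw [largestPartsSum, mul_add_one]; omega
      _ ≤ k * ((n + h - 1) / h) := Nat.mul_le_mul_left k hceil

theorem fpartSplit_largestPartsSum (hk : 0 < k) (hkh : k < h) :
    fpartSplit n (largestPartsSum n h k) k (h - k) = fpart n h := by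
  obtain ⟨d, ρ, hρ, rfl⟩ : ∃ d ρ, ρ < h ∧ n = h * d + ρ :=
    ⟨n / h, n % h, Nat.mod_lt _ (by omega), (Nat.div_add_mod n h).symm⟩
  rw [fpartSplit, largestPartsSum, Nat.mul_add_div (by omega), Nat.div_eq_of_lt hρ, add_zero,
    Nat.mul_add_mod, Nat.mod_eq_of_lt hρ, fpart_mul_add d hρ]
  obtain ⟨g, rfl⟩ : ∃ g, h = k + g := ⟨h - k, by omega⟩
  rw [Nat.add_sub_cancel_left]
  rcases Nat.lt_or_ge ρ k with hρk | hkρ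
  · rw [min_eq_left hρk.le, show (k + g) * d + ρ - (k * d + ρ) = g * d + 0 by
      rw [add_mul]; omega, fpart_mul_add d hρk, fpart_mul_add d (by omega : 0 < g)]
    rw [Nat.sub_zero, pow_zero, one_mul, show k + g - ρ = k - ρ + g by omega, pow_add]
    ring
  · rw [min_eq_right hkρ, show (k + g) * d + ρ - (k * d + k) = g * d + (ρ - k) by
      rw [add_mul]; omega, show k * d + k = k * (d + 1) + 0 by ring,
      fpart_mul_add (d + 1) hk, fpart_mul_add d (by omega : ρ - k < g)]
    rw [Nat.sub_zero, pow_zero, one_mul, ← mul_assoc, ← pow_add, Nat.add_sub_cancel' hkρ,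
      show k + g - ρ = g - (ρ - k) by omega]

theorem sub_succ_div_lt_div (hk : 0 < k) (hkh : k < h) {s : ℕ}
    (hs : largestPartsSum n h k ≤ s) (hsn : s < n) : (n - (s + 1)) / (h - k) < s / k := by
  obtain ⟨g, rfl⟩ : ∃ g, h = k + g := ⟨h - k, by omega⟩
  have hρ : n % (k + g) < k + g := Nat.mod_lt n (by omega)
  have hn : n / (k + g) * k + n / (k + g) * g + n % (k + g) = n := by
    rw [← mul_add, mul_comm, Nat.div_add_mod]
  rw [largestPartsSum, mul_comm] at hs
  rw [Nat.add_sub_cancel_left]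
  set d := n / (k + g)
  set ρ := n % (k + g)
  -- every designated part has size at least e, every other part at most e
  obtain ⟨e, hek, heg⟩ : ∃ e, e * k ≤ s ∧ n - (s + 1) < e * g := by
    rcases Nat.lt_or_ge ρ k with hρk | hkρ
    · exact ⟨d, by omega, by omega⟩
    · exact ⟨d + 1, by rw [add_one_mul]; omega, by rw [add_one_mul]; omega⟩
  exact ((Nat.div_lt_iff_lt_mul (by omega)).2 heg).trans_le ((Nat.le_div_iff_mul_le hk).2 hek)

theorem fpartSplit_antitoneOn (hk : 0 < k) (hkh : k < h) :
    AntitoneOn (fun s ↦ fpartSplit n s k (h - k)) {s | largestPartsSum n h k ≤ s} := by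
  have hg : 0 < h - k := by omega
  refine antitoneOn_nat_Ici_of_succ_le fun s hs ↦ ?_
  rcases Nat.lt_or_ge s n with hsn | hns
  · have hlt := sub_succ_div_lt_div hk hkh hs hsn
    refine Nat.le_of_mul_le_mul_right ?_
      (Nat.mul_pos (hlt.trans_le' (Nat.zero_le _)) ((n - (s + 1)) / (h - k)).succ_pos)
    rw [fpartSplit_succ_mul hk hg hsn]
    exact Nat.mul_le_mul_left _ (by nlinarith)
  · simp [fpartSplit, Nat.sub_eq_zero_of_le (by omega : n ≤ s + 1), fpart_zero hg]

end

theorem stmt13_general (n h k t : ℕ) (hk : 0 < k) (hkh : k < h)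
    (ht : k * ((n + h - 1) / h) ≤ t) (htn : t ≤ n) :
    ((fpart t k * fpart (n - t) (h - k) : ℕ) : ℝ) ≤
      (fpart n h : ℝ) *
        (1 - 1 / (((n + h - 1) / h : ℕ) : ℝ) + 1 / ((t / (2 * k) : ℕ) : ℝ)) ^
          ((t - k * ((n + h - 1) / h)) / 2) := by
  have hnc : n ≤ (n + h - 1) / h * (k + (h - k)) := by
    have := Nat.lt_div_mul_add (a := n + h - 1) (by omega : 0 < h)
    rw [Nat.add_sub_cancel' hkh.le]
    omega
  have hs₀ : largestPartsSum n h k ≤ t - (t - k * ((n + h - 1) / h)) / 2 := by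
    have := largestPartsSum_le_mul_ceil (k := k) (by omega : 0 < h) (n := n)
    omega
  change (fpartSplit n t k (h - k) : ℝ) ≤ _
  calc (fpartSplit n t k (h - k) : ℝ)
      ≤ _ * fpartSplit n (t - (t - k * ((n + h - 1) / h)) / 2) k (h - k) :=
        fpartSplit_le_pow_mul hk (by omega) ht htn hnc
    _ ≤ _ * fpartSplit n (largestPartsSum n h k) k (h - k) := by
        gcongr
        · exact pow_nonneg (one_sub_one_div_add_one_div_nonneg _ _) _
        · exact fpartSplit_antitoneOn hk hkh (le_refl (largestPartsSum n h k)) hs₀ hs₀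
    _ = _ := by rw [fpartSplit_largestPartsSum hk hkh, mul_comm]

/-- the element-moving process, starting from an equitable partition of
n into h parts and ending with the k designated parts equitable with t total elements
(so the final product of part sizes is f(t,k)·f(n-t,h-k)), yields a product at most
f(n,h)·(1 - 1/⌈n/h⌉ + 1/⌊t/(2k)⌋)^{(t - k⌈n/h⌉)/2}. -/
theorem stmt13 (n h k t : ℕ) (hnh : h ≤ n) (hk : 0 < k) (hkh : k < h)
    (ht : k * ((n + h - 1) / h) ≤ t) (htn : t ≤ n) :
    ((fpart t k * fpart (n - t) (h - k) : ℕ) : ℝ) ≤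
      (fpart n h : ℝ) *
        (1 - 1 / (((n + h - 1) / h : ℕ) : ℝ) + 1 / ((t / (2 * k) : ℕ) : ℝ)) ^
          ((t - k * ((n + h - 1) / h)) / 2) :=
  stmt13_general n h k t hk hkh ht htn
end

section
/- For positive integers h ≥ 2 and k ≥ h^{1/3} + 2, the quantity g(h^k, h)/C(h^k, h) satisfies g(h^k,h)/C(h^k,h) ≤ (h!/(h^h - h)) · (1 + 4/h^{h^{1/3}}), where C(m,h) is the binomial coefficient. -/
lemma gval_one (h : ℕ) : gval h 1 = 0 := by
  rw [gval, dif_neg (by omega)]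

lemma gval_pow_succ {h : ℕ} (hh : 2 ≤ h) (k : ℕ) :
    gval h (h ^ (k + 1)) = h ^ (k * h) + h * gval h (h ^ k) := by
  have hpos : 0 < h := by omega
  have hmod : h ^ (k + 1) % h = 0 := by rw [pow_succ, Nat.mul_mod_left]
  have hdiv : h ^ (k + 1) / h = h ^ k := by rw [pow_succ, Nat.mul_div_cancel _ hpos]
  have hdiv_ceil : (h ^ (k + 1) + h - 1) / h = h ^ k := by
    have : h ^ (k + 1) + h - 1 = (h - 1) + h ^ k * h := by rw [pow_succ]; omega
    rw [this, Nat.add_mul_div_right _ _ hpos, Nat.div_eq_of_lt (by omega), zero_add]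
  rw [gval, dif_pos ⟨hh, Nat.le_self_pow (by omega) h⟩]
  simp [fpart, hmod, hdiv, hdiv_ceil, pow_mul]

lemma gval_pow_closed_form {h : ℕ} (hh : 2 ≤ h) (k : ℕ) :
    ((h : ℝ) ^ h - h) * gval h (h ^ k) + (h : ℝ) ^ k = (h : ℝ) ^ (h * k) := by
  induction k with
  | zero => simp [gval_one]
  | succ k ih =>
    rw [gval_pow_succ hh k]
    push_cast
    linear_combination (h : ℝ) * ih

lemma sub_pow_le_factorial_mul_choose {n k : ℕ} (hkn : k ≤ n) :
    ((n : ℝ) - k) ^ k ≤ k.factorial * n.choose k := by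
  rw [← Nat.cast_sub hkn]
  exact_mod_cast calc (n - k) ^ k ≤ (n + 1 - k) ^ k := Nat.pow_le_pow_left (by omega) k
    _ ≤ n.descFactorial k := Nat.pow_sub_le_descFactorial n k
    _ = k.factorial * n.choose k := Nat.descFactorial_eq_factorial_mul_choose n k

lemma pow_mul_one_sub_sq_div_le_sub_pow {x : ℝ} (n : ℕ) (hx : 0 < x) (hnx : (n : ℝ) ≤ x) :
    x ^ n * (1 - n ^ 2 / x) ≤ (x - n) ^ n := by
  have hbern : 1 + n * (-(n / x)) ≤ (1 + -(n / x)) ^ n :=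
    one_add_mul_le_pow (by rw [neg_le_neg_iff, div_le_iff₀ hx]; linarith) n
  calc x ^ n * (1 - n ^ 2 / x) = x ^ n * (1 + n * (-(n / x))) := by ring
    _ ≤ x ^ n * (1 + -(n / x)) ^ n := by gcongr
    _ = (x - n) ^ n := by rw [← mul_pow]; field_simp; ring

lemma pow_le_one_add_div_mul_sub_pow {x E : ℝ} (n : ℕ) (hE : 4 / 3 ≤ E)
    (hnx : (n : ℝ) ^ 2 * E ≤ x) :
    x ^ n ≤ (1 + 4 / E) * (x - n) ^ n := by
  have hE0 : 0 < E := by linarith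
  rcases n.eq_zero_or_pos with rfl | hn
  · simpa using (by positivity : (0 : ℝ) ≤ 4 / E)
  have hn1 : (1 : ℝ) ≤ n := by exact_mod_cast hn
  have hx : 0 < x := by nlinarith
  have hq : (n : ℝ) ^ 2 / x ≤ 1 / E := by
    rw [div_le_div_iff₀ hx hE0]; linarith
  have hE_inv : 1 / E ≤ 3 / 4 := by rw [div_le_iff₀ hE0]; linarith
  -- `(1 - q)(1 + 4ε) ≥ (1 - ε)(1 + 4ε) = 1 + ε(3 - 4ε) ≥ 1` for `q ≤ ε ≤ 3/4`
  have habsorb : 1 ≤ (1 - n ^ 2 / x) * (1 + 4 / E) := by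
    have hq0 : 0 ≤ (n : ℝ) ^ 2 / x := by positivity
    rw [show (4 : ℝ) / E = 4 * (1 / E) by ring]
    nlinarith
  have hbern := pow_mul_one_sub_sq_div_le_sub_pow n hx (by nlinarith)
  calc x ^ n ≤ x ^ n * ((1 - n ^ 2 / x) * (1 + 4 / E)) :=
        le_mul_of_one_le_right (by positivity) habsorb
    _ = x ^ n * (1 - n ^ 2 / x) * (1 + 4 / E) := by ring
    _ ≤ (x - n) ^ n * (1 + 4 / E) := by gcongr
    _ = (1 + 4 / E) * (x - n) ^ n := mul_comm _ _

/-- for h ≥ 2 and k ≥ h^{1/3} + 2,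
g(h^k,h)/C(h^k,h) ≤ (h!/(h^h - h))·(1 + 4/h^{h^{1/3}}). -/
theorem stmt17 (h k : ℕ) (hh : 2 ≤ h)
    (hk : (h : ℝ) ^ ((1 : ℝ) / 3) + 2 ≤ (k : ℝ)) :
    (gval h (h ^ k) : ℝ) / ((h ^ k).choose h : ℝ) ≤
      ((Nat.factorial h : ℝ) / ((h : ℝ) ^ h - h)) *
        (1 + 4 / (h : ℝ) ^ ((h : ℝ) ^ ((1 : ℝ) / 3))) := by
  set E := (h : ℝ) ^ ((h : ℝ) ^ ((1 : ℝ) / 3))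
  have h2 : (2 : ℝ) ≤ h := by exact_mod_cast hh
  have h1 : (1 : ℝ) ≤ h := by linarith
  have hroot : 1 ≤ (h : ℝ) ^ ((1 : ℝ) / 3) := Real.one_le_rpow h1 (by norm_num)
  have hE : 4 / 3 ≤ E := calc
    4 / 3 ≤ (h : ℝ) ^ (1 : ℝ) := by rw [Real.rpow_one]; linarith
    _ ≤ E := Real.rpow_le_rpow_of_exponent_le h1 hroot
  have hsmall : (h : ℝ) ^ 2 * E ≤ (h : ℝ) ^ k := by
    rw [← Real.rpow_natCast _ 2, ← Real.rpow_add (by positivity), ← Real.rpow_natCast]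
    exact Real.rpow_le_rpow_of_exponent_le h1 (by push_cast; linarith)
  have hk0 : k ≠ 0 := by rintro rfl; norm_num at hk; linarith
  have hchoose := sub_pow_le_factorial_mul_choose (Nat.le_self_pow hk0 h)
  have hgval := gval_pow_closed_form hh k
  have hden : 0 < (h : ℝ) ^ h - h := by
    simpa using pow_lt_pow_right₀ (by linarith : (1 : ℝ) < h) (by omega : 1 < h)
  rw [div_le_iff₀ (by exact_mod_cast Nat.choose_pos (Nat.le_self_pow hk0 h)),
    div_mul_eq_mul_div, div_mul_eq_mul_div, le_div_iff₀ hden]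
  push_cast at hchoose
  calc (gval h (h ^ k) : ℝ) * ((h : ℝ) ^ h - h) ≤ (h : ℝ) ^ (h * k) := by
        nlinarith [pow_pos (by linarith : (0 : ℝ) < h) k]
    _ = ((h : ℝ) ^ k) ^ h := by rw [← pow_mul, mul_comm]
    _ ≤ (1 + 4 / E) * ((h : ℝ) ^ k - h) ^ h := pow_le_one_add_div_mul_sub_pow h hE hsmall
    _ ≤ (1 + 4 / E) * (h.factorial * (h ^ k).choose h) := by gcongr
    _ = h.factorial * (1 + 4 / E) * (h ^ k).choose h := by ring
end

section
/- For every graph H on h ≥ 2 vertices and every n > h(h-1), i_H(n) > f(n,h): taking a balanced blowup H(n), one part has size at least h, and replacing the independent set on that part by an induced copy of H adds at least one induced copy of H while preserving all f(n,h) transversal copies. -/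
/-- The number of induced copies of H in G: the number of h-element vertex subsets of G
inducing a graph isomorphic to H. -/
noncomputable def inducedCopies {h n : ℕ} (H : SimpleGraph (Fin h))
    (G : SimpleGraph (Fin n)) : ℕ :=
  Nat.card {s : Finset (Fin n) //
    s.card = h ∧ Nonempty (G.induce (s : Set (Fin n)) ≃g H)}

/-- i_H(n): the maximum number of induced copies of H over all n-vertex graphs. -/
noncomputable def maxInduced {h : ℕ} (n : ℕ) (H : SimpleGraph (Fin h)) : ℕ :=
  Finset.univ.sup fun G : SimpleGraph (Fin n) => inducedCopies H G

/-! Blow up `H` along the residue map `v ↦ v % h` on `Fin n`: its parts are the residue classes,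
of sizes `⌈n/h⌉` and `⌊n/h⌋`, and each choice of one vertex per part spans an induced copy of `H`,
so there are `f(n,h)` such copies. Since `n > h(h-1)`, part `0` contains `0, h, …, (h-1)h`; placing
a further copy of `H` on these vertices adds no edge between parts, so every transversal copy
survives, and the new copy is not transversal. -/

open Finset Function

lemma card_le_inducedCopies {h n : ℕ} {H : SimpleGraph (Fin h)} {G : SimpleGraph (Fin n)}
    {ι : Type*} (F : ι → (H ↪g G)) (hF : Injective fun i => Set.range (F i)) :
    Nat.card ι ≤ inducedCopies H G := by
  refine Nat.card_le_card_of_injective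
    (fun i => ⟨univ.map (F i).toEmbedding, by simp, ?_⟩) fun i j hij => hF ?_
  · rw [coe_map, coe_univ, Set.image_univ]
    exact ⟨(F i).isoInduceRange.symm⟩
  · simpa [Finset.ext_iff, Set.ext_iff] using congrArg Subtype.val hij

section Sections

variable {V W : Type*} {p : V → W}

lemma Function.LeftInverse.eq_of_range_eq {σ τ : W → V} (hσ : LeftInverse p σ)
    (hτ : LeftInverse p τ) (hστ : Set.range σ = Set.range τ) : σ = τ := by
  funext a
  obtain ⟨b, hb⟩ : σ a ∈ Set.range τ := hστ ▸ Set.mem_range_self a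
  have hba : b = a := by rw [← hτ b, hb, hσ a]
  rw [← hb, hba]

lemma Function.LeftInverse.range_ne_of_comp_const [Nontrivial W] {σ : W → V}
    (hσ : LeftInverse p σ) {e : W → V} (he : Injective e) (hpe : ∀ a b, p (e a) = p (e b)) :
    Set.range σ ≠ Set.range e := by
  intro hrange
  obtain ⟨a, b, hab⟩ := exists_pair_ne W
  obtain ⟨x, hx⟩ : e a ∈ Set.range σ := hrange ▸ Set.mem_range_self a
  obtain ⟨y, hy⟩ : e b ∈ Set.range σ := hrange ▸ Set.mem_range_self b
  have hxy : x = y := by rw [← hσ x, ← hσ y, hx, hy, hpe]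
  exact hab (he (by rw [← hx, ← hy, hxy]))

end Sections

namespace SimpleGraph

variable {V W : Type*} {H : SimpleGraph W} {p : V → W}

lemma comap_sup_adj_of_leftInverse {K : SimpleGraph V} (hK : ∀ u v, K.Adj u v → p u = p v)
    {σ : W → V} (hσ : LeftInverse p σ) {a b : W} :
    (H.comap p ⊔ K).Adj (σ a) (σ b) ↔ H.Adj a b := by
  refine ⟨fun hab => ?_, fun hab => Or.inl (by simpa [hσ a, hσ b] using hab)⟩
  rcases hab with hab | hab
  · simpa [hσ a, hσ b] using hab
  · have hab' : a = b := by rw [← hσ a, ← hσ b, hK _ _ hab]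
    exact absurd hab (hab' ▸ K.irrefl)

lemma comap_sup_map_adj {e : W ↪ V} (hpe : ∀ a b, p (e a) = p (e b)) {a b : W} :
    (H.comap p ⊔ H.map e).Adj (e a) (e b) ↔ H.Adj a b := by
  simp [hpe a b]

lemma map_adj_fibre {e : W ↪ V} (hpe : ∀ a b, p (e a) = p (e b)) {u v : V}
    (huv : (H.map e).Adj u v) : p u = p v := by
  obtain ⟨-, a, b, -, rfl, rfl⟩ := huv
  exact hpe a b

abbrev blowupWithCopy (H : SimpleGraph W) (p : V → W) (e : W ↪ V) : SimpleGraph V :=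
  H.comap p ⊔ H.map e

def Embedding.ofLeftInverse {σ : W → V} (hσ : LeftInverse p σ) {e : W ↪ V}
    (hpe : ∀ a b, p (e a) = p (e b)) : H ↪g H.blowupWithCopy p e :=
  ⟨⟨σ, hσ.injective⟩, comap_sup_adj_of_leftInverse (fun _ _ => map_adj_fibre hpe) hσ⟩

def Embedding.intoFibre {e : W ↪ V} (hpe : ∀ a b, p (e a) = p (e b)) :
    H ↪g H.blowupWithCopy p e :=
  ⟨e, comap_sup_map_adj hpe⟩

end SimpleGraph

open SimpleGraph in
theorem prod_card_fibre_lt_inducedCopies {h n : ℕ} (hh : 1 < h) (H : SimpleGraph (Fin h))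
    (p : Fin n → Fin h) (e : Fin h ↪ Fin n) (hpe : ∀ a b, p (e a) = p (e b)) :
    ∏ i, Nat.card {v // p v = i} < inducedCopies H (H.blowupWithCopy p e) := by
  have : Nontrivial (Fin h) := Fin.nontrivial_iff_two_le.2 hh
  let σ (s : ∀ i, {v // p v = i}) (i : Fin h) : Fin n := s i
  have hσ (s) : LeftInverse p (σ s) := fun i => (s i).2
  let F : (∀ i, {v // p v = i}) ⊕ Unit → (H ↪g H.blowupWithCopy p e) :=
    Sum.elim (fun s => .ofLeftInverse (hσ s) hpe) fun _ => .intoFibre hpe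
  have hF : Injective fun x => Set.range (F x) := by
    rintro (s | ⟨⟩) (t | ⟨⟩) hst
    · have := LeftInverse.eq_of_range_eq (hσ s) (hσ t) hst
      exact congrArg Sum.inl (funext fun i => Subtype.ext (congrFun this i))
    · exact absurd hst ((hσ s).range_ne_of_comp_const e.injective hpe)
    · exact absurd hst.symm ((hσ t).range_ne_of_comp_const e.injective hpe)
    · rfl
  simpa only [Nat.card_sum, Nat.card_pi, Nat.card_unique, Nat.add_one_le_iff]
    using card_le_inducedCopies F hF

section Residues

variable {h n : ℕ}

def modFin (hh : 0 < h) (v : Fin n) : Fin h := ⟨v % h, Nat.mod_lt _ hh⟩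

open scoped Count in
lemma card_modFin_fibre (hh : 0 < h) (i : Fin h) :
    Nat.card {v : Fin n // modFin hh v = i} = n / h + if (i : ℕ) < n % h then 1 else 0 := by
  have hi : (i : ℕ) % h = i := Nat.mod_eq_of_lt i.isLt
  rw [← hi, ← Nat.count_modEq_card n hh, Nat.count_eq_card_fintype, ← Nat.card_eq_fintype_card]
  exact Nat.card_congr <| (Fin.equivSubtype.subtypeEquiv fun v => by
    simp [modFin, Fin.ext_iff, Fin.equivSubtype, Nat.ModEq, hi]).trans
    (Equiv.subtypeSubtypeEquivSubtypeInter (· < n) (· ≡ i [MOD h]))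

lemma prod_add_ite_lt {r : ℕ} (hr : r ≤ h) (q : ℕ) :
    ∏ i : Fin h, (q + if (i : ℕ) < r then 1 else 0) = (q + 1) ^ r * q ^ (h - r) := by
  rw [Fin.prod_univ_eq_prod_range (fun i => q + if i < r then 1 else 0),
    ← Nat.add_sub_cancel' hr, prod_range_add, Nat.add_sub_cancel_left]
  congr 1
  · rw [prod_congr rfl fun i hi => by rw [if_pos (mem_range.1 hi)], prod_const, card_range]
  · rw [prod_congr rfl fun i _ => by rw [if_neg (by omega)], prod_const, card_range, add_zero]

lemma fpart_eq (hh : 0 < h) : fpart n h = (n / h + 1) ^ (n % h) * (n / h) ^ (h - n % h) := by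
  rcases Nat.eq_zero_or_pos (n % h) with hr | hr
  · simp [fpart, hr]
  · have hlt : h - 1 < h := by omega
    rw [fpart, Nat.add_sub_assoc hh, Nat.add_div hh, Nat.div_eq_of_lt hlt, Nat.mod_eq_of_lt hlt,
      if_pos (by omega)]

lemma prod_card_modFin_fibre (hh : 0 < h) :
    ∏ i, Nat.card {v : Fin n // modFin hh v = i} = fpart n h := by
  simp_rw [card_modFin_fibre, prod_add_ite_lt (Nat.mod_lt n hh).le, fpart_eq hh]

def mulEmbedding (hn : h * (h - 1) < n) : Fin h ↪ Fin n where
  toFun i := ⟨i * h, by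
    have : (i : ℕ) * h ≤ (h - 1) * h := Nat.mul_le_mul_right h (by omega)
    rw [Nat.mul_comm (h - 1)] at this
    omega⟩
  inj' i j hij := Fin.ext (Nat.eq_of_mul_eq_mul_right i.pos (Fin.ext_iff.1 hij))

lemma modFin_mulEmbedding (hh : 0 < h) (hn : h * (h - 1) < n) (i : Fin h) :
    modFin hh (mulEmbedding hn i) = ⟨0, hh⟩ :=
  Fin.ext (Nat.mul_mod_left _ _)

end Residues

/-- for every graph H on h ≥ 2 vertices and every n > h(h-1),
i_H(n) > f(n,h). -/
theorem stmt19 (h n : ℕ) (H : SimpleGraph (Fin h)) (hh : 2 ≤ h)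
    (hn : h * (h - 1) < n) :
    fpart n h < maxInduced n H := by
  have hpos : 0 < h := by omega
  calc fpart n h = ∏ i, Nat.card {v : Fin n // modFin hpos v = i} :=
        (prod_card_modFin_fibre hpos).symm
    _ < inducedCopies H (H.blowupWithCopy (modFin hpos) (mulEmbedding hn)) :=
        prod_card_fibre_lt_inducedCopies hh H _ _ fun a b => by
          rw [modFin_mulEmbedding, modFin_mulEmbedding]
    _ ≤ maxInduced n H := le_sup (mem_univ _)
end
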